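/- Let X be a smooth complex projective Calabi-Yau variety of dimension d ≥ 2 and let E and F be spherical objects of D(X) whose spherical twists commute and which are not orthogonal (i.e. Hom(E, F[i]) ≠ 0 for some integer i). Then Φ_E(F) ≅ F[−d]. -/

import Mathlib

/-!
This file formalizes a statement from "Commuting reflection functors and
orthogonal spherical objects".  Mathlib does not have bounded derived categories
of coherent sheaves on smooth projective varieties, so the geometric setting is
axiomatized: `T` plays the role of the bounded derived category `D(X)` of a
smooth complex projective variety `X` — a ℂ-linear triangulated category with
finite-dimensional, bounded graded Hom's — and the Calabi-Yau condition is
expressed by Serre duality in the form of a perfect trace pairing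
`Hom(A,B) × Hom(B,A⟦d⟧) → ℂ`.
-/

open CategoryTheory Limits Pretriangulated Module

universe v u

namespace SphericalPaper

variable (T : Type u) [Category.{v} T] [Preadditive T] [Linear ℂ T]
  [HasZeroObject T] [HasShift T ℤ] [∀ n : ℤ, (shiftFunctor T n).Additive]
  [Pretriangulated T] [HasFiniteBiproducts T]

/-- Hom-finiteness and boundedness of the graded Hom's, as holds in the bounded
derived category of coherent sheaves on a smooth complex projective variety. -/
class HomFiniteBounded : Prop where
  finite : ∀ A B : T, FiniteDimensional ℂ (A ⟶ B)
  bounded : ∀ A B : T, ∃ N : ℕ, ∀ i : ℤ, (N : ℤ) < |i| → ∀ f : A ⟶ B⟦i⟧, f = 0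

/-- The Calabi-Yau condition in dimension `d`: the `d`-th shift is a Serre
functor, expressed by trace functionals inducing a perfect pairing
`Hom(A,B) × Hom(B,A⟦d⟧) → ℂ` (Serre duality `Hom(A,B) ≅ Hom(B,A⟦d⟧)^*`). -/
class CalabiYau (d : ℤ) : Type (max u v) where
  tr : ∀ A : T, (A ⟶ A⟦d⟧) →ₗ[ℂ] ℂ
  nondegen_left : ∀ (A B : T) (f : A ⟶ B),
    (∀ g : B ⟶ A⟦d⟧, tr A (f ≫ g) = 0) → f = 0
  nondegen_right : ∀ (A B : T) (g : B ⟶ A⟦d⟧),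
    (∀ f : A ⟶ B, tr A (f ≫ g) = 0) → g = 0

variable {T}

/-- An object `E` is spherical (for dimension `d`) if `Hom(E,E⟦i⟧)` is
one-dimensional for `i = 0` and `i = d` and vanishes for all other `i`. -/
def IsSpherical (d : ℤ) (E : T) : Prop :=
  finrank ℂ (E ⟶ E⟦(0 : ℤ)⟧) = 1 ∧ finrank ℂ (E ⟶ E⟦d⟧) = 1 ∧
    ∀ i : ℤ, i ≠ 0 → i ≠ d → ∀ f : E ⟶ E⟦i⟧, f = 0

/-- The spherical twist `Φ_E` attached to a spherical object `E`, presented by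
its defining natural distinguished triangle
`Φ_E(G) → RHom(E,G) ⊗_ℂ E → G → Φ_E(G)[1]` :
`Φ` is a triangulated autoequivalence, `Ψ` is the functor `G ↦ RHom(E,G) ⊗_ℂ E`
(each `Ψ(G)` is exhibited as a finite biproduct of shifts `E⟦-i⟧` indexed by
bases of the spaces `Hom(E,G⟦i⟧)`, the natural map `Ψ(G) → G` restricting to
evaluation of the corresponding basis vectors, i.e. it is the evaluation map,
which is the Fourier-Mukai description of the twist along the spherical
object). -/
structure SphericalTwist (E : T) where
  Φ : T ⥤ T
  equiv : Φ.IsEquivalence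
  commShift : Φ.CommShift ℤ
  triangulated : letI := commShift; Φ.IsTriangulated
  Ψ : T ⥤ T
  α : Φ ⟶ Ψ
  ε : Ψ ⟶ 𝟭 T
  δ : 𝟭 T ⟶ Φ ⋙ shiftFunctor T (1 : ℤ)
  dist : ∀ G : T, Triangle.mk (α.app G) (ε.app G) (δ.app G) ∈ distTriang T
  m : T → ℕ
  deg : ∀ G : T, Fin (m G) → ℤ
  decomp : ∀ G : T, Ψ.obj G ≅ ⨁ (fun p : Fin (m G) => E⟦-(deg G p)⟧)
  bas : ∀ (G : T) (n : ℤ), Basis {p : Fin (m G) // deg G p = n} ℂ (E ⟶ G⟦n⟧)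
  eval : ∀ (G : T) (p : Fin (m G)),
    biproduct.ι (fun q : Fin (m G) => E⟦-(deg G q)⟧) p ≫ (decomp G).inv ≫ ε.app G =
      ((shiftEquiv' T (-(deg G p)) (deg G p) (neg_add_cancel _)).toAdjunction.homEquiv
        E G).symm (bas G (deg G p) ⟨p, rfl⟩)


/-!
First, `Φ_E(E) ≅ E⟦-d⟧` for every spherical `E`: the evaluation map `RHom(E,E) ⊗ E → E` is split
by its degree-`0` summand, so the twist triangle of `E` splits and `Φ_E(E)`, whose nonzero
endomorphisms are invertible, is isomorphic to one of the summands `E` or `E⟦-d⟧`. It is not `E`,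
because `ε_* : Hom(E, RHom(E,E) ⊗ E) → Hom(E, E)` is a surjection between one-dimensional
spaces, so it is injective and kills the image of the injective map
`α_* : Hom(E, Φ_E E) → Hom(E, RHom(E,E) ⊗ E)`.

Now put `X = Φ_E(F)`. Commutation of the twists gives `Φ_F(X) ≅ Φ_E(Φ_F F) ≅ X⟦-d⟧`, so the
connecting map of the twist triangle of `X` lies in `Hom(X, X⟦1-d⟧) ≅ Hom(F, F⟦1-d⟧) = 0`.
Hence `X` is a retract of `RHom(F,X) ⊗ F` and `X ≅ F⟦-n⟧` for some `n`. Applying `Φ_E` to a nonzero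
map `E → F⟦j⟧` gives a nonzero map `E⟦-d⟧ → F⟦j-n⟧`, i.e. `E → F⟦j+d-n⟧`; iterating, boundedness
of the graded Hom's forces `n = d`.
-/

section ZeroMorphisms

variable {C : Type*} [Category C] [HasZeroMorphisms C]

lemma isIso_i_of_retract {X Y : C} (h : Retract X Y) (hY : ∀ f : Y ⟶ Y, IsIso f ↔ f ≠ 0)
    (hX : 𝟙 X ≠ 0) : IsIso h.i := by
  have he : h.r ≫ h.i ≠ 0 := fun he => hX <| calc
    𝟙 X = h.i ≫ (h.r ≫ h.i) ≫ h.r := by simp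
    _ = 0 := by rw [he, Limits.zero_comp, Limits.comp_zero]
  have := (hY _).2 he
  have hidem : (h.r ≫ h.i) ≫ (h.r ≫ h.i) = (h.r ≫ h.i) ≫ 𝟙 Y := by simp
  exact ⟨h.r, h.retract, (cancel_epi _).1 hidem⟩

lemma isIso_iff_ne_zero_of_fullyFaithful {D : Type*} [Category D] [HasZeroMorphisms D]
    (G : C ⥤ D) [G.Full] [G.Faithful] [G.PreservesZeroMorphisms] {X : C}
    (hX : ∀ f : X ⟶ X, IsIso f ↔ f ≠ 0) (f : G.obj X ⟶ G.obj X) : IsIso f ↔ f ≠ 0 := by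
  obtain ⟨g, rfl⟩ := G.map_surjective f
  rw [isIso_iff_of_reflects_iso, Ne, G.map_eq_zero_iff]
  exact hX g

end ZeroMorphisms

section Preadditive

variable {C : Type*} [Category C] [Preadditive C]

lemma exists_retract_of_retract_biproduct {J : Type} [Fintype J] {Z : J → C} [HasBiproduct Z]
    {X : C} (h : Retract X (⨁ Z)) (hX : ∀ f : X ⟶ X, IsIso f ↔ f ≠ 0) :
    ∃ p, Nonempty (Retract X (Z p)) := by
  have hsum : ∑ p, (h.i ≫ biproduct.π Z p) ≫ (biproduct.ι Z p ≫ h.r) = 𝟙 X := calc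
    _ = h.i ≫ (∑ p, biproduct.π Z p ≫ biproduct.ι Z p) ≫ h.r := by
      simp only [Preadditive.comp_sum, Preadditive.sum_comp, Category.assoc]
    _ = 𝟙 X := by rw [biproduct.total, Category.id_comp, h.retract]
  obtain ⟨p, -, hp⟩ := Finset.exists_ne_zero_of_sum_ne_zero (hsum ▸ (hX (𝟙 X)).1 inferInstance)
  have := (hX _).2 hp
  exact ⟨p, ⟨⟨h.i ≫ biproduct.π Z p, (biproduct.ι Z p ≫ h.r) ≫ inv (_ ≫ biproduct.ι Z p ≫ h.r),
    by rw [← Category.assoc, IsIso.hom_inv_id]⟩⟩⟩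

lemma exists_iso_of_retract_biproduct {J : Type} [Fintype J] {Z : J → C} [HasBiproduct Z]
    {X : C} (h : Retract X (⨁ Z)) (hX : ∀ f : X ⟶ X, IsIso f ↔ f ≠ 0)
    (hZ : ∀ p, ∀ f : Z p ⟶ Z p, IsIso f ↔ f ≠ 0) : ∃ p, Nonempty (X ≅ Z p) := by
  obtain ⟨p, ⟨r⟩⟩ := exists_retract_of_retract_biproduct h hX
  have := isIso_i_of_retract r (hZ p) ((hX (𝟙 X)).1 inferInstance)
  exact ⟨p, ⟨asIso r.i⟩⟩

end Preadditive

section Linear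

variable {𝕜 : Type*} [Field 𝕜] {C : Type*} [Category C] [Preadditive C] [Linear 𝕜 C]

lemma isIso_smul {X Y : C} {c : 𝕜} (hc : c ≠ 0) (f : X ⟶ Y) [IsIso f] : IsIso (c • f) :=
  ⟨c⁻¹ • inv f, by simp [smul_smul, hc], by simp [smul_smul, hc]⟩

lemma isIso_of_finrank_hom_eq_one {X Y : C} (e : X ≅ Y) (h : finrank 𝕜 (X ⟶ Y) = 1)
    {f : X ⟶ Y} (hf : f ≠ 0) : IsIso f := by
  have he : e.hom ≠ 0 := fun he => hf <| by
    rw [← Category.id_comp f, ← e.hom_inv_id, he, Limits.zero_comp, Limits.zero_comp]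
  obtain ⟨c, rfl⟩ := (finrank_eq_one_iff_of_nonzero' e.hom he).1 h f
  exact isIso_smul (by rintro rfl; simp at hf) e.hom

lemma isIso_iff_ne_zero_of_finrank_end_eq_one {X : C} (h : finrank 𝕜 (X ⟶ X) = 1)
    (f : X ⟶ X) : IsIso f ↔ f ≠ 0 := by
  refine ⟨fun hf h0 => ?_, isIso_of_finrank_hom_eq_one (Iso.refl X) h⟩
  subst h0
  have : Subsingleton (X ⟶ X) := ⟨((IsZero.iff_id_eq_zero X).2 (isIsoZeroSelfEquiv X hf)).eq_of_src⟩
  simp [finrank_zero_of_subsingleton] at h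

noncomputable def biproductHomLinearEquiv {J : Type} [Fintype J] (W : C) (Z : J → C)
    [HasBiproduct Z] :
    (W ⟶ ⨁ Z) ≃ₗ[𝕜] Π p, (W ⟶ Z p) where
  toFun f p := f ≫ biproduct.π Z p
  map_add' f g := by funext p; simp
  map_smul' c f := by funext p; simp
  invFun := biproduct.lift
  left_inv f := by ext; simp
  right_inv g := by funext p; simp

end Linear

section Shift

variable {C : Type*} [Category C] [HasShift C ℤ]

def shiftHomEquiv (A B : C) {a b c : ℤ} (h : a + c = b) : (A⟦a⟧ ⟶ B⟦b⟧) ≃ (A ⟶ B⟦c⟧) :=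
  ((shiftEquiv C a).toAdjunction.homEquiv A (B⟦b⟧)).trans
    (Iso.homCongr (Iso.refl A) ((shiftFunctorAdd' C b (-a) c (by omega)).symm.app B))

def homShiftEquivOfFullyFaithful {D : Type*} [Category D] [HasShift D ℤ] {G : C ⥤ D}
    [G.CommShift ℤ] (hG : G.FullyFaithful) (A B : C) (n : ℤ) :
    (G.obj A ⟶ (G.obj B)⟦n⟧) ≃ (A ⟶ B⟦n⟧) :=
  (Iso.homCongr (Iso.refl _) ((G.commShiftIso n).app B).symm).trans hG.homEquiv.symm

lemma nontrivial_hom_shift_of_iso (G : C ⥤ C) [G.CommShift ℤ] [G.Full] [G.Faithful] {A B : C}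
    {a b j k : ℤ} (eA : G.obj A ≅ A⟦a⟧) (eB : G.obj B ≅ B⟦b⟧) (h : a + k = b + j)
    [Nontrivial (A ⟶ B⟦j⟧)] : Nontrivial (A ⟶ B⟦k⟧) :=
  ((shiftHomEquiv A B h).symm.trans <| (Iso.homCongr eA ((shiftFunctor C j).mapIso eB ≪≫
    (shiftFunctorAdd' C b j (b + j) rfl).symm.app B)).symm.trans <|
      homShiftEquivOfFullyFaithful (.ofFullyFaithful G) A B j).nontrivial

end Shift

section Spherical

variable {C : Type*} [Category C] [Preadditive C] [Linear ℂ C] [HasShift C ℤ] {d : ℤ} {F : C}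

lemma IsSpherical.finrank_end (hF : IsSpherical d F) : finrank ℂ (F ⟶ F) = 1 :=
  (Linear.homCongr ℂ (Iso.refl F) ((shiftFunctorZero C ℤ).app F)).finrank_eq ▸ hF.1

lemma IsSpherical.isIso_iff_ne_zero (hF : IsSpherical d F) (f : F ⟶ F) : IsIso f ↔ f ≠ 0 :=
  isIso_iff_ne_zero_of_finrank_end_eq_one hF.finrank_end f

lemma IsSpherical.subsingleton_hom_shift (hF : IsSpherical d F) {i : ℤ} (h0 : i ≠ 0)
    (hd : i ≠ d) : Subsingleton (F ⟶ F⟦i⟧) :=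
  ⟨fun f g => (hF.2.2 i h0 hd f).trans (hF.2.2 i h0 hd g).symm⟩

end Spherical

section HomFiniteBounded

variable {C : Type*} [Category C] [Preadditive C] [Linear ℂ C] [HasShift C ℤ] [HomFiniteBounded C]

instance HomFiniteBounded.finiteDimensional (A B : C) : FiniteDimensional ℂ (A ⟶ B) :=
  HomFiniteBounded.finite A B

lemma eq_zero_of_nontrivial_hom_shift_add {A B : C} {j₀ t : ℤ} [Nontrivial (A ⟶ B⟦j₀⟧)]
    (ht : ∀ j, Nontrivial (A ⟶ B⟦j⟧) → Nontrivial (A ⟶ B⟦j + t⟧)) : t = 0 := by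
  have hk : ∀ k : ℕ, Nontrivial (A ⟶ B⟦j₀ + k * t⟧) := by
    intro k
    induction k with
    | zero => simpa
    | succ k ih => simpa [add_mul, add_assoc] using ht _ ih
  by_contra ht0
  obtain ⟨N, hN⟩ := HomFiniteBounded.bounded A B
  set k : ℕ := N + j₀.natAbs + 1
  obtain ⟨f, hf⟩ := exists_ne (0 : A ⟶ B⟦j₀ + k * t⟧)
  refine hf (hN _ ?_ f)
  have hkt : (k : ℤ) ≤ |(k : ℤ) * t| := by
    rw [abs_mul, Nat.abs_cast]
    exact le_mul_of_one_le_right (by positivity) (Int.one_le_abs ht0)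
  have := abs_add_le (j₀ + k * t) (-j₀)
  simp only [add_neg_cancel_comm, abs_neg, Int.abs_eq_natAbs] at this hkt ⊢
  omega

end HomFiniteBounded

section Pretriangulated

variable {C : Type*} [Category C] [Preadditive C] [HasZeroObject C] [HasShift C ℤ]
  [∀ n : ℤ, (shiftFunctor C n).Additive] [Pretriangulated C]

lemma nonempty_retract_obj₁_of_mor₃_eq_zero (Δ : Triangle C) (hΔ : Δ ∈ distTriang C)
    (h : Δ.mor₃ = 0) : Nonempty (Retract Δ.obj₁ Δ.obj₂) := by
  obtain ⟨e, he, -⟩ := exists_iso_binaryBiproduct_of_distTriang Δ hΔ h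
  exact ⟨⟨Δ.mor₁, e.hom ≫ biprod.fst, by rw [← Category.assoc, he, biprod.inl_fst]⟩⟩

lemma nonempty_retract_obj₃_of_mor₃_eq_zero (Δ : Triangle C) (hΔ : Δ ∈ distTriang C)
    (h : Δ.mor₃ = 0) : Nonempty (Retract Δ.obj₃ Δ.obj₂) := by
  obtain ⟨s, hs⟩ := Δ.coyoneda_exact₃ hΔ (𝟙 _) (by rw [h, Limits.comp_zero])
  exact ⟨⟨s, Δ.mor₂, hs.symm⟩⟩

end Pretriangulated

namespace SphericalTwist

variable {E : T} (t : SphericalTwist E) {d : ℤ}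

lemma deg_eq_zero_or_eq (hE : IsSpherical d E) (p : Fin (t.m E)) :
    t.deg E p = 0 ∨ t.deg E p = d := by
  by_contra! h
  have := hE.subsingleton_hom_shift h.1 h.2
  exact (t.bas E _).ne_zero ⟨p, rfl⟩ (Subsingleton.elim _ _)

lemma isIso_ι_comp_ε_app (G : T) (p : Fin (t.m G)) (hp : IsIso (t.bas G (t.deg G p) ⟨p, rfl⟩)) :
    IsIso (biproduct.ι _ p ≫ (t.decomp G).inv ≫ t.ε.app G) := by
  rw [t.eval]
  erw [Adjunction.homEquiv_counit]
  exact IsIso.comp_isIso' (@Functor.map_isIso _ _ _ _ _ _ _ _ hp)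
    (by simp only [Equivalence.toAdjunction_counit]; infer_instance)

lemma isSplitEpi_ε_app_self (hE : IsSpherical d E) : IsSplitEpi (t.ε.app E) := by
  have : Nontrivial (E ⟶ E⟦(0 : ℤ)⟧) := Module.nontrivial_of_finrank_eq_succ hE.1
  obtain ⟨⟨p, hp⟩⟩ := (t.bas E 0).index_nonempty
  have := t.isIso_ι_comp_ε_app E p <|
    isIso_of_finrank_hom_eq_one ((shiftFunctorZero' T _ hp).app E).symm (by rw [hp]; exact hE.1)
      ((t.bas E _).ne_zero _)
  exact ⟨⟨inv (biproduct.ι _ p ≫ (t.decomp E).inv ≫ t.ε.app E) ≫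
    biproduct.ι (fun q => E⟦-(t.deg E q)⟧) p ≫ (t.decomp E).inv, by simp⟩⟩

lemma δ_app_self_eq_zero (hE : IsSpherical d E) : t.δ.app E = 0 :=
  have := t.isSplitEpi_ε_app_self hE
  Triangle.mor₃_eq_zero_of_epi₂ _ (t.dist E) (show Epi (t.ε.app E) from inferInstance)

lemma finrank_hom_Ψ_obj_self [∀ A B : T, FiniteDimensional ℂ (A ⟶ B)] (hE : IsSpherical d E)
    (hd : d ≠ 0) : finrank ℂ (E ⟶ t.Ψ.obj E) = 1 := by
  have hterm (p : Fin (t.m E)) :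
      finrank ℂ (E ⟶ E⟦-(t.deg E p)⟧) = if t.deg E p = 0 then 1 else 0 := by
    rcases t.deg_eq_zero_or_eq hE p with h | h
    · rw [if_pos h, h, neg_zero, hE.1]
    · have := hE.subsingleton_hom_shift (i := -(t.deg E p)) (by omega) (by omega)
      rw [if_neg (by omega), finrank_zero_of_subsingleton]
  rw [(Linear.homCongr ℂ (Iso.refl E) (t.decomp E)).finrank_eq,
    (biproductHomLinearEquiv E _).finrank_eq, Module.finrank_pi_fintype,
    Finset.sum_congr rfl fun p _ => hterm p, Finset.sum_boole, Nat.cast_id,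
    ← Fintype.card_subtype, ← finrank_eq_card_basis (t.bas E 0), hE.1]

lemma subsingleton_hom_Φ_obj_self [∀ A B : T, FiniteDimensional ℂ (A ⟶ B)]
    (hE : IsSpherical d E) (hd : d ≠ 0) : Subsingleton (E ⟶ t.Φ.obj E) := by
  have := t.isSplitEpi_ε_app_self hE
  have : Mono (t.α.app E) := Triangle.mono₁ _ (t.dist E) (t.δ_app_self_eq_zero hE)
  have hinj : Function.Injective (Linear.rightComp ℂ E (t.ε.app E)) :=
    (LinearMap.injective_iff_surjective_of_finrank_eq_finrank
      (by rw [t.finrank_hom_Ψ_obj_self hE hd]; exact hE.finrank_end.symm)).2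
      fun w => ⟨w ≫ section_ (t.ε.app E), by simp⟩
  have hαε : t.α.app E ≫ t.ε.app E = 0 := comp_distTriang_mor_zero₁₂ _ (t.dist E)
  refine ⟨fun u v => (cancel_mono (t.α.app E)).1 (hinj ?_)⟩
  simp [hαε]

lemma exists_iso_shift_of_retract (hE : ∀ f : E ⟶ E, IsIso f ↔ f ≠ 0) {X G : T}
    (hX : ∀ f : X ⟶ X, IsIso f ↔ f ≠ 0) (r : Retract X (t.Ψ.obj G)) :
    ∃ p, Nonempty (X ≅ E⟦-(t.deg G p)⟧) :=
  exists_iso_of_retract_biproduct (r.trans (Retract.ofIso (t.decomp G))) hX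
    fun _ => isIso_iff_ne_zero_of_fullyFaithful (shiftFunctor T _) hE

lemma nonempty_Φ_obj_self_iso [∀ A B : T, FiniteDimensional ℂ (A ⟶ B)] (hE : IsSpherical d E)
    (hd : d ≠ 0) : Nonempty (t.Φ.obj E ≅ E⟦-d⟧) := by
  have := t.equiv
  obtain ⟨r⟩ := nonempty_retract_obj₁_of_mor₃_eq_zero _ (t.dist E) (t.δ_app_self_eq_zero hE)
  obtain ⟨p, ⟨e⟩⟩ := t.exists_iso_shift_of_retract hE.isIso_iff_ne_zero
    (isIso_iff_ne_zero_of_fullyFaithful t.Φ hE.isIso_iff_ne_zero) r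
  rcases t.deg_eq_zero_or_eq hE p with h | h
  · have := t.subsingleton_hom_Φ_obj_self hE hd
    let i : E ≅ t.Φ.obj E := ((shiftFunctorZero' T _ (by omega)).app E).symm ≪≫ e.symm
    refine absurd ?_ ((hE.isIso_iff_ne_zero (𝟙 E)).1 inferInstance)
    rw [← i.hom_inv_id, Subsingleton.elim i.hom 0, Limits.zero_comp]
  · exact ⟨e ≪≫ eqToIso (by rw [h])⟩

lemma δ_app_eq_zero_of_iso {G : T} {k : ℤ} (e : t.Φ.obj G ≅ G⟦k⟧) [Subsingleton (G ⟶ G⟦k + 1⟧)] :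
    t.δ.app G = 0 := by
  have : Subsingleton (G ⟶ (t.Φ.obj G)⟦(1 : ℤ)⟧) := (Iso.homCongr (Iso.refl G)
    ((shiftFunctor T 1).mapIso e ≪≫ (shiftFunctorAdd' T k 1 (k + 1) rfl).symm.app G)).subsingleton
  exact @Subsingleton.elim _ this _ _

end SphericalTwist

theorem twist_of_nonorthogonal_is_shift_general
    [HomFiniteBounded T] (d : ℕ) (hd : 2 ≤ d)
    {E F : T} (hE : IsSpherical (d : ℤ) E) (hF : IsSpherical (d : ℤ) F)
    (tE : SphericalTwist E) (tF : SphericalTwist F)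
    (hcomm : Nonempty (tF.Φ ⋙ tE.Φ ≅ tE.Φ ⋙ tF.Φ))
    (hnorth : ∃ (i : ℤ) (f : E ⟶ F⟦i⟧), f ≠ 0) :
    Nonempty (tE.Φ.obj F ≅ F⟦-(d : ℤ)⟧) := by
  have := tE.equiv
  let := tE.commShift
  obtain ⟨eE⟩ := tE.nonempty_Φ_obj_self_iso hE (by omega)
  obtain ⟨eF⟩ := tF.nonempty_Φ_obj_self_iso hF (by omega)
  obtain ⟨c⟩ := hcomm
  set X := tE.Φ.obj F
  have eX : tF.Φ.obj X ≅ X⟦-(d : ℤ)⟧ :=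
    (c.app F).symm ≪≫ tE.Φ.mapIso eF ≪≫ (tE.Φ.commShiftIso _).app F
  have : Subsingleton (X ⟶ X⟦-(d : ℤ) + 1⟧) :=
    have := hF.subsingleton_hom_shift (i := -(d : ℤ) + 1) (by omega) (by omega)
    (homShiftEquivOfFullyFaithful (.ofFullyFaithful tE.Φ) F F _).subsingleton
  obtain ⟨r⟩ := nonempty_retract_obj₃_of_mor₃_eq_zero _ (tF.dist X) (tF.δ_app_eq_zero_of_iso eX)
  obtain ⟨p, ⟨e⟩⟩ := tF.exists_iso_shift_of_retract hF.isIso_iff_ne_zero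
    (isIso_iff_ne_zero_of_fullyFaithful tE.Φ hF.isIso_iff_ne_zero) r
  obtain ⟨i, f, hf⟩ := hnorth
  have : Nontrivial (E ⟶ F⟦i⟧) := ⟨f, 0, hf⟩
  have hp : (d : ℤ) - tF.deg X p = 0 :=
    eq_zero_of_nontrivial_hom_shift_add (j₀ := i) fun j _ =>
      nontrivial_hom_shift_of_iso (j := j) tE.Φ eE e (by ring)
  exact ⟨e ≪≫ eqToIso (by rw [show tF.deg X p = d by omega])⟩

/-- Let `X` be a smooth complex projective Calabi-Yau variety of
dimension `d ≥ 2` and let `E`, `F` be spherical objects of `D(X)` whose spherical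
twists commute and which are not orthogonal (`Hom(E, F[i]) ≠ 0` for some `i`).
Then `Φ_E(F) ≅ F⟦-d⟧`. -/
theorem twist_of_nonorthogonal_is_shift
    [HomFiniteBounded T] (d : ℕ) (hd : 2 ≤ d) [CalabiYau T (d : ℤ)]
    {E F : T} (hE : IsSpherical (d : ℤ) E) (hF : IsSpherical (d : ℤ) F)
    (tE : SphericalTwist E) (tF : SphericalTwist F)
    (hcomm : Nonempty (tF.Φ ⋙ tE.Φ ≅ tE.Φ ⋙ tF.Φ))
    (hnorth : ∃ (i : ℤ) (f : E ⟶ F⟦i⟧), f ≠ 0) :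
    Nonempty (tE.Φ.obj F ≅ F⟦-(d : ℤ)⟧) :=
  twist_of_nonorthogonal_is_shift_general d hd hE hF tE tF hcomm hnorth

end SphericalPaper
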